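/- arXiv:2410.02605 — 4 statements merged into one kernel-verified Lean document; each statement's English description precedes it below -/
import Mathlib

section
/- Let U : ℝ → ℝ be continuous and strictly increasing. Then the following are equivalent: (i) there exists a function φ : ℝ × ℝ → ℝ such that for all x, a, b ∈ ℝ with b ≠ 0, U(x+a) − U(x) = φ(a,b)·(U(x+b) − U(x)); (ii) either there exist A, B ∈ ℝ such that U(x) = A·x + B for all x ∈ ℝ, or there exist A, B, C ∈ ℝ such that U(x) = A + B·exp(C·x) for all x ∈ ℝ. -/
/-!
Normalise `U` to `g a = (U a - U 0) / (U 1 - U 0)` (if `U 1 = U 0`, the equation with `b = 1`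
already forces `U` to be constant). Taking `b = 1`, `x = 0` identifies `φ (a, 1)` with `g a`, and
comparing the equation at `(x, a)` and `(a, x)` shows that `g` is quasi-additive:
`g (x + y) = g x + g y + c * g x * g y` with `c = g 2 - 2`. For `c = 0` this is Cauchy's equation,
so `g` is linear; for `c ≠ 0` the function `1 + c * g` is a continuous exponential.
-/

open Real

def TranslationHomogeneous (U : ℝ → ℝ) : Prop :=
  ∃ φ : ℝ × ℝ → ℝ, ∀ x a b : ℝ, b ≠ 0 → U (x + a) - U x = φ (a, b) * (U (x + b) - U x)

def IsAffineOrExp (f : ℝ → ℝ) : Prop :=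
  (∃ A B : ℝ, ∀ x, f x = A * x + B) ∨ ∃ A B C : ℝ, ∀ x, f x = A + B * exp (C * x)

theorem IsAffineOrExp.of_eq_const_add_mul {f u : ℝ → ℝ} (hf : IsAffineOrExp f) (p q : ℝ)
    (hu : ∀ x, u x = p + q * f x) : IsAffineOrExp u := by
  rcases hf with ⟨A, B, hf⟩ | ⟨A, B, C, hf⟩
  · exact Or.inl ⟨q * A, p + q * B, fun x => by rw [hu, hf]; ring⟩
  · exact Or.inr ⟨p + q * A, q * B, C, fun x => by rw [hu, hf]; ring⟩

theorem IsAffineOrExp.translationHomogeneous {U : ℝ → ℝ} (hU : IsAffineOrExp U) :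
    TranslationHomogeneous U := by
  rcases hU with ⟨A, B, hU⟩ | ⟨A, B, C, hU⟩
  · refine ⟨fun p => p.1 / p.2, fun x a b hb => ?_⟩
    simp only [hU]
    field_simp
    ring
  · refine ⟨fun p => (exp (C * p.1) - 1) / (exp (C * p.2) - 1), fun x a b hb => ?_⟩
    simp only [hU, mul_add, exp_add]
    rcases eq_or_ne C 0 with rfl | hC
    · simp
    · have : exp (C * b) - 1 ≠ 0 :=
        sub_ne_zero.mpr fun h => mul_ne_zero hC hb (exp_eq_one_iff _ |>.mp h)
      field_simp
      ring

theorem eq_mul_of_continuous_of_map_add {f : ℝ → ℝ} (hf : Continuous f)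
    (hadd : ∀ x y, f (x + y) = f x + f y) (x : ℝ) : f x = f 1 * x := by
  simpa [mul_comm] using map_real_smul (AddMonoidHom.mk' f hadd) hf x 1

theorem exists_eq_exp_mul_of_continuous_of_map_add {G : ℝ → ℝ} (hG : Continuous G)
    (h0 : G 0 = 1) (hmul : ∀ x y, G (x + y) = G x * G y) : ∃ k, ∀ x, G x = exp (k * x) := by
  have hpos : ∀ x, 0 < G x := by
    intro x
    have hne : G (x / 2) ≠ 0 := fun h => by simpa [h, h0] using hmul (x / 2) (-(x / 2))
    rw [show x = x / 2 + x / 2 by ring, hmul]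
    exact mul_self_pos.mpr hne
  have hlog := eq_mul_of_continuous_of_map_add (hG.log fun x => (hpos x).ne')
    fun x y => by rw [hmul, log_mul (hpos x).ne' (hpos y).ne']
  exact ⟨log (G 1), fun x => by rw [← hlog x, exp_log (hpos x)]⟩

theorem isAffineOrExp_of_map_add_eq {g : ℝ → ℝ} (hg : Continuous g) (h0 : g 0 = 0) (c : ℝ)
    (h : ∀ x y, g (x + y) = g x + g y + c * g x * g y) : IsAffineOrExp g := by
  rcases eq_or_ne c 0 with rfl | hc
  · refine Or.inl ⟨g 1, 0, fun x => ?_⟩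
    simpa using eq_mul_of_continuous_of_map_add hg (fun x y => by simpa using h x y) x
  · obtain ⟨k, hk⟩ := exists_eq_exp_mul_of_continuous_of_map_add (G := fun x => 1 + c * g x)
      (by fun_prop) (by simp [h0]) (fun x y => by simp only [h]; ring)
    exact Or.inr ⟨-1 / c, 1 / c, k, fun x => by rw [← hk x]; field_simp; ring⟩

theorem map_add_eq_of_sub_eq_mul {g : ℝ → ℝ} (h1 : g 1 = 1)
    (h : ∀ x a, g (x + a) - g x = g a * (g (x + 1) - g x)) (x y : ℝ) :
    g (x + y) = g x + g y + (g 2 - 2) * g x * g y := by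
  have h1x := h 1 x
  rw [add_comm 1 x, one_add_one_eq_two, h1] at h1x
  linear_combination h x y + g y * h1x

theorem TranslationHomogeneous.isAffineOrExp {U : ℝ → ℝ} (hU : Continuous U)
    (h : TranslationHomogeneous U) : IsAffineOrExp U := by
  obtain ⟨φ, hφ⟩ := h
  rcases eq_or_ne (U 1) (U 0) with h10 | h10
  · refine Or.inl ⟨0, U 0, fun a => ?_⟩
    simpa [h10, sub_eq_zero] using hφ 0 a 1 one_ne_zero
  have hD : U 1 - U 0 ≠ 0 := sub_ne_zero.mpr h10
  let g a := (U a - U 0) / (U 1 - U 0)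
  have hUg : ∀ a, U a = U 0 + (U 1 - U 0) * g a := fun a => by
    simp only [g]
    field_simp
    ring
  have hφ1 : ∀ a, φ (a, 1) = g a := fun a => by
    have := hφ 0 a 1 one_ne_zero
    rw [zero_add, zero_add, hUg a] at this
    exact mul_left_cancel₀ hD (by linear_combination -this)
  have hg : ∀ x a, g (x + a) - g x = g a * (g (x + 1) - g x) := fun x a => by
    have := hφ x a 1 one_ne_zero
    rw [hφ1, hUg (x + a), hUg x, hUg (x + 1)] at this
    exact mul_left_cancel₀ hD (by linear_combination this)
  exact (isAffineOrExp_of_map_add_eq (by fun_prop) (by simp [g]) _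
    (map_add_eq_of_sub_eq_mul (by simp [g, hD]) hg)).of_eq_const_add_mul _ _ hUg

theorem stmt_0_general (U : ℝ → ℝ) (hU_cont : Continuous U) :
    (∃ φ : ℝ × ℝ → ℝ, ∀ x a b : ℝ, b ≠ 0 →
        U (x + a) - U x = φ (a, b) * (U (x + b) - U x)) ↔
    ((∃ A B : ℝ, ∀ x : ℝ, U x = A * x + B) ∨
      (∃ A B C : ℝ, ∀ x : ℝ, U x = A + B * Real.exp (C * x))) :=
  ⟨TranslationHomogeneous.isAffineOrExp hU_cont, IsAffineOrExp.translationHomogeneous⟩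

/-- Equivalence of items 2 and 4 in the characterization of utility functions
for which EUT policy optimization admits Markovian optimal policies:
a continuous strictly increasing `U : ℝ → ℝ` satisfies the translation-homogeneity
functional equation iff it is affine or exponential. -/
theorem stmt_0 (U : ℝ → ℝ) (hU_cont : Continuous U) (hU_mono : StrictMono U) :
    (∃ φ : ℝ × ℝ → ℝ, ∀ x a b : ℝ, b ≠ 0 →
        U (x + a) - U x = φ (a, b) * (U (x + b) - U x)) ↔
    ((∃ A B : ℝ, ∀ x : ℝ, U x = A * x + B) ∨
      (∃ A B C : ℝ, ∀ x : ℝ, U x = A + B * Real.exp (C * x))) :=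
  stmt_0_general U hU_cont
end

section
/- Let U : ℝ → ℝ be strictly increasing. Suppose there exists a function μ : ℝ × ℝ → ℝ such that for all y, c, d ∈ ℝ, U(y+c) − U(c) = μ(c,d)·(U(y+d) − U(d)). Then, defining φ(a,b) := (U(1+a) − U(1)) / (U(1+b) − U(1)) for b ≠ 0 (this denominator is nonzero since U is strictly increasing), the function φ satisfies: for all x, a, b ∈ ℝ with b ≠ 0, U(x+a) − U(x) = φ(a,b)·(U(x+b) − U(x)). -/
/-- Implication 5 ⇒ 2 in the extended characterization theorem: if a strictly
increasing `U : ℝ → ℝ` satisfies the functional equation with `μ`, then the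
explicit function `φ(a,b) = (U(1+a) − U(1)) / (U(1+b) − U(1))` satisfies the
functional equation of condition 2. -/
theorem stmt_1 (U : ℝ → ℝ) (hU_mono : StrictMono U)
    (μ : ℝ × ℝ → ℝ)
    (hμ : ∀ y c d : ℝ, U (y + c) - U c = μ (c, d) * (U (y + d) - U d)) :
    ∀ x a b : ℝ, b ≠ 0 →
      U (x + a) - U x =
        ((U (1 + a) - U 1) / (U (1 + b) - U 1)) * (U (x + b) - U x) := by
  intro x a b hb
  have hden : U (1 + b) - U 1 ≠ 0 := by
    rcases lt_trichotomy b 0 with h | h | h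
    · have : U (1 + b) < U 1 := hU_mono (by linarith)
      linarith
    · exact absurd h hb
    · have : U 1 < U (1 + b) := hU_mono (by linarith)
      linarith
  have ha := hμ a x 1
  have hbb := hμ b x 1
  rw [add_comm a x] at ha
  rw [add_comm b x] at hbb
  rw [add_comm 1 a, add_comm 1 b] at *
  rw [ha, hbb]
  field_simp
end

section
/- Let (Ω, 𝔽, ℙ) be a probability space and X : Ω → ℝ a bounded random variable. Let g : [0,1] → [0,1] be non-decreasing with g(0) = 0 and g(1) = 1, and define g̃ : [0,1] → [0,1] by g̃(t) := 1 − g(1−t). Let F_{−X}(x) := ℙ(−X ≤ x). Then the distortion risk measure ρ_g(X) := ∫_{−∞}^0 g̃(F_{−X}(x)) dx − ∫_0^{+∞} g(1 − F_{−X}(x)) dx satisfies ρ_g(X) = ∫_0^{+∞} g̃(ℙ(X ≥ x)) dx − ∫_0^{+∞} g(ℙ(−X ≥ x)) dx. -/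
open MeasureTheory

/-- Any distortion risk measure is a CPT value: for a bounded random variable `X`,
a non-decreasing `g : [0,1] → [0,1]` with `g(0) = 0`, `g(1) = 1`, and
`g̃(t) = 1 − g(1−t)`, the distortion risk measure
`ρ_g(X) = ∫_{−∞}^0 g̃(F_{−X}(x)) dx − ∫_0^∞ g(1 − F_{−X}(x)) dx` equals
`∫_0^∞ g̃(ℙ(X ≥ x)) dx − ∫_0^∞ g(ℙ(−X ≥ x)) dx`. -/
theorem stmt_9 {Ω : Type*} [MeasurableSpace Ω] (ℙ : Measure Ω) [IsProbabilityMeasure ℙ]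
    (X : Ω → ℝ) (hX : Measurable X) (hX_bdd : ∃ M : ℝ, ∀ ω, |X ω| ≤ M)
    (g : ℝ → ℝ) (hg_mono : MonotoneOn g (Set.Icc 0 1))
    (hg_maps : Set.MapsTo g (Set.Icc 0 1) (Set.Icc 0 1))
    (hg0 : g 0 = 0) (hg1 : g 1 = 1) :
    (∫ x in Set.Iic (0:ℝ), (1 - g (1 - (ℙ {ω | -X ω ≤ x}).toReal)))
        - (∫ x in Set.Ioi (0:ℝ), g (1 - (ℙ {ω | -X ω ≤ x}).toReal))
      = (∫ x in Set.Ioi (0:ℝ), (1 - g (1 - (ℙ {ω | X ω ≥ x}).toReal)))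
        - (∫ x in Set.Ioi (0:ℝ), g ((ℙ {ω | -X ω ≥ x}).toReal)) := by
  have h1 : (∫ x in Set.Iic (0:ℝ), (1 - g (1 - (ℙ {ω | -X ω ≤ x}).toReal)))
      = ∫ x in Set.Ioi (0:ℝ), (1 - g (1 - (ℙ {ω | X ω ≥ x}).toReal)) := by
    have hset : ∀ x : ℝ, {ω | -X ω ≤ x} = {ω | X ω ≥ -x} := by
      intro x; ext ω; simp [neg_le, ge_iff_le]
    calc (∫ x in Set.Iic (0:ℝ), (1 - g (1 - (ℙ {ω | -X ω ≤ x}).toReal)))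
        = ∫ x in Set.Iic (0:ℝ),
            (fun y => 1 - g (1 - (ℙ {ω | X ω ≥ y}).toReal)) (-x) := by
          simp_rw [hset]
      _ = ∫ x in Set.Ioi (-(0:ℝ)), (1 - g (1 - (ℙ {ω | X ω ≥ x}).toReal)) :=
          integral_comp_neg_Iic 0 (fun y => 1 - g (1 - (ℙ {ω | X ω ≥ y}).toReal))
      _ = _ := by rw [neg_zero]
  have h2 : (∫ x in Set.Ioi (0:ℝ), g (1 - (ℙ {ω | -X ω ≤ x}).toReal))
      = ∫ x in Set.Ioi (0:ℝ), g ((ℙ {ω | -X ω ≥ x}).toReal) := by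
    have hcount : Set.Countable {x : ℝ | 0 < ℙ {ω | -X ω = x}} :=
      Measure.countable_meas_level_set_pos hX.neg
    have hnull : (volume : Measure ℝ) {x : ℝ | 0 < ℙ {ω | -X ω = x}} = 0 :=
      hcount.measure_zero _
    have hae : ∀ᵐ x : ℝ, ℙ {ω | -X ω = x} = 0 := by
      rw [MeasureTheory.ae_iff]
      simpa [pos_iff_ne_zero] using hnull
    refine MeasureTheory.integral_congr_ae ?_
    filter_upwards [ae_restrict_of_ae hae] with x hx
    have h1' : (1 : ℝ) - (ℙ {ω | -X ω ≤ x}).toReal = (ℙ {ω | x < -X ω}).toReal := by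
      have hc : {ω | x < -X ω} = {ω | -X ω ≤ x}ᶜ := by ext ω; simp [not_le]
      rw [hc, measure_compl (by exact measurableSet_le hX.neg measurable_const)
        (measure_ne_top _ _), measure_univ]
      rw [ENNReal.toReal_sub_of_le prob_le_one ENNReal.one_ne_top]
      simp
    have h2' : ℙ {ω | -X ω ≥ x} = ℙ {ω | x < -X ω} := by
      have : {ω | -X ω ≥ x} = {ω | x < -X ω} ∪ {ω | -X ω = x} := by
        ext ω
        simp only [Set.mem_union, Set.mem_setOf_eq, ge_iff_le]
        constructor
        · intro h; rcases lt_or_eq_of_le h with h | h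
          · exact Or.inl h
          · exact Or.inr h.symm
        · rintro (h | h);exacts [le_of_lt h, h.ge]
      rw [this]
      exact le_antisymm ((measure_union_le _ _).trans (by rw [hx, add_zero]))
        (measure_mono Set.subset_union_left)
    simp only [h1', h2']
  rw [h1, h2]
end

section
/- Let T be a finite type, R : T → ℝ a function taking nonnegative values, and ρ : ℝ^d → (T → ℝ) such that for every θ ∈ ℝ^d, ρ_θ is a probability mass function on T (ρ_θ(τ) ≥ 0 for all τ and Σ_{τ∈T} ρ_θ(τ) = 1), and for every τ ∈ T the map θ ↦ ρ_θ(τ) is differentiable. Let w : [0,1] → [0,1] be differentiable with w(0) = 0. Define S_θ(z) := Σ_{τ ∈ T : R(τ) > z} ρ_θ(τ) and J(θ) := ∫_0^{+∞} w(S_θ(z)) dz. Then J is differentiable and, for every θ ∈ ℝ^d, ∇J(θ) = Σ_{τ ∈ T} φ_θ(R(τ)) · ∇_θ ρ_θ(τ), where φ_θ(t) := ∫_0^t w'(S_θ(z)) dz. -/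
/-!
The survival function `z ↦ S_θ(z)` depends on `z` only through the finite set
`{τ | z < R τ}`, and the set of levels `z > 0` at which this set equals a given `B` does not
depend on `θ`. Hence `J(θ) = ∑_B ℓ(B) w(ρ_θ(B))` is a finite sum with constant weights `ℓ(B)`
(the empty layer has infinite length but is killed by `w 0 = 0`). Differentiating termwise and
exchanging the two finite sums gives `∑_τ (∑_{B ∋ τ} ℓ(B) w'(ρ_θ(B))) ∇ρ_θ(τ)`, and the inner
sum is `φ_θ(R τ)` because for `z > 0` one has `z < R τ` exactly when `τ` lies in the layer of `z`.
-/

open MeasureTheory Finset Set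

theorem integral_comp_eq_sum_measureReal_preimage {α ι E : Type*} [MeasurableSpace α]
    [Fintype ι] [NormedAddCommGroup E] [NormedSpace ℝ E] [CompleteSpace E] {μ : Measure α}
    {A : α → ι} (hA : ∀ i, MeasurableSet (A ⁻¹' {i})) {F : ι → E}
    (hF : ∀ i, F i = 0 ∨ μ (A ⁻¹' {i}) < ⊤) :
    ∫ x, F (A x) ∂μ = ∑ i, μ.real (A ⁻¹' {i}) • F i := by
  classical
  have hF_eq : (fun x => F (A x)) = fun x => ∑ i, (A ⁻¹' {i}).indicator (fun _ => F i) x := by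
    funext x
    simp [indicator_apply]
  rw [hF_eq, integral_finsetSum]
  · simp_rw [integral_indicator_const _ (hA _)]
  · intro i _
    refine (integrable_indicator_iff (hA i)).2 ?_
    rcases hF i with h | h
    · simp [h]
    · exact integrableOn_const h.ne

section Superlevel

variable {T : Type*} [Fintype T] (R : T → ℝ)

noncomputable def superlevelFinset (z : ℝ) : Finset T := {τ | z < R τ}

variable {R}

theorem mem_superlevelFinset {z : ℝ} {τ : T} : τ ∈ superlevelFinset R z ↔ z < R τ := by
  simp [superlevelFinset]

variable (R)

theorem measurableSet_superlevelFinset_preimage (B : Finset T) :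
    MeasurableSet (superlevelFinset R ⁻¹' {B}) := by
  have h : superlevelFinset R ⁻¹' {B} = ⋂ τ, {z | z < R τ ↔ τ ∈ B} := by
    ext z
    simp [Finset.ext_iff, mem_superlevelFinset]
  rw [h]
  refine MeasurableSet.iInter fun τ => ?_
  by_cases hτ : τ ∈ B
  · simp only [hτ, iff_true]
    exact measurableSet_Iio
  · simp only [hτ, iff_false, not_lt]
    exact measurableSet_Ici

/-- For `B = ∅` the layer is unbounded and `volume.real` returns the junk value `0`. -/
noncomputable def layerLength (B : Finset T) : ℝ :=
  volume.real (superlevelFinset R ⁻¹' {B} ∩ Ioi 0)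

variable {R}

theorem volume_superlevelFinset_preimage_inter_Ioi_lt_top {B : Finset T} (hB : B.Nonempty) :
    volume (superlevelFinset R ⁻¹' {B} ∩ Ioi 0) < ⊤ := by
  obtain ⟨τ, hτ⟩ := hB
  refine (measure_mono ?_).trans_lt (measure_Ioo_lt_top (a := 0) (b := R τ))
  rintro z ⟨hzB, hz0⟩
  exact ⟨hz0, mem_superlevelFinset.1 ((Set.mem_singleton_iff.1 hzB) ▸ hτ)⟩

theorem measureReal_superlevelFinset_preimage_inter_Ioo [DecidableEq T] (B : Finset T) (τ : T) :
    volume.real (superlevelFinset R ⁻¹' {B} ∩ Ioo 0 (R τ)) =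
      if τ ∈ B then layerLength R B else 0 := by
  have hlt : ∀ z ∈ superlevelFinset R ⁻¹' {B}, (z < R τ ↔ τ ∈ B) := fun z hz => by
    rw [← mem_superlevelFinset, Set.mem_singleton_iff.1 hz]
  split_ifs with hτ
  · congr 1
    ext z
    exact ⟨fun ⟨hzB, hz⟩ => ⟨hzB, hz.1⟩, fun ⟨hzB, hz⟩ => ⟨hzB, hz, (hlt z hzB).2 hτ⟩⟩
  · convert measureReal_empty (μ := volume)
    exact eq_empty_of_forall_notMem fun z ⟨hzB, hz⟩ => hτ ((hlt z hzB).1 hz.2)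

variable (R)

theorem integral_Ioi_comp_superlevelFinset {E : Type*} [NormedAddCommGroup E] [NormedSpace ℝ E]
    [CompleteSpace E] (F : Finset T → E) (hF : F ∅ = 0) :
    ∫ z in Ioi 0, F (superlevelFinset R z) = ∑ B, layerLength R B • F B := by
  have hmeas := measurableSet_superlevelFinset_preimage R
  rw [integral_comp_eq_sum_measureReal_preimage hmeas fun B => ?_]
  · simp_rw [measureReal_restrict_apply (hmeas _)]
    rfl
  · rcases B.eq_empty_or_nonempty with rfl | hB
    · exact Or.inl hF
    · rw [Measure.restrict_apply (hmeas B)]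
      exact Or.inr (volume_superlevelFinset_preimage_inter_Ioi_lt_top hB)

theorem intervalIntegral_comp_superlevelFinset [DecidableEq T] {E : Type*} [NormedAddCommGroup E]
    [NormedSpace ℝ E] [CompleteSpace E] {τ : T} (hτ : 0 ≤ R τ) (F : Finset T → E) :
    ∫ z in 0..R τ, F (superlevelFinset R z) = ∑ B with τ ∈ B, layerLength R B • F B := by
  have hmeas := measurableSet_superlevelFinset_preimage R
  rw [intervalIntegral.integral_of_le hτ, integral_Ioc_eq_integral_Ioo,
    integral_comp_eq_sum_measureReal_preimage hmeas fun B => Or.inr ?_, Finset.sum_filter]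
  · refine sum_congr rfl fun B _ => ?_
    rw [measureReal_restrict_apply (hmeas B), measureReal_superlevelFinset_preimage_inter_Ioo]
    split_ifs <;> simp
  · rw [Measure.restrict_apply (hmeas B)]
    exact (measure_mono inter_subset_right).trans_lt measure_Ioo_lt_top

end Superlevel

theorem hasFDerivAt_sum_mul_comp_sum {T E : Type*} [Fintype T] [DecidableEq T]
    [NormedAddCommGroup E] [NormedSpace ℝ E] {ρ : E → T → ℝ} {θ : E}
    (hρ : ∀ τ, DifferentiableAt ℝ (ρ · τ) θ) {w : ℝ → ℝ} (hw : Differentiable ℝ w)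
    (c : Finset T → ℝ) :
    HasFDerivAt (fun θ => ∑ B, c B * w (∑ τ ∈ B, ρ θ τ))
      (∑ τ, (∑ B with τ ∈ B, c B * deriv w (∑ τ' ∈ B, ρ θ τ')) • fderiv ℝ (ρ · τ) θ) θ := by
  have hB : ∀ B : Finset T, HasFDerivAt (fun θ => c B * w (∑ τ ∈ B, ρ θ τ))
      ((c B * deriv w (∑ τ ∈ B, ρ θ τ)) • ∑ τ ∈ B, fderiv ℝ (ρ · τ) θ) θ := fun B => by
    have := ((hw (∑ τ ∈ B, ρ θ τ)).hasDerivAt.comp_hasFDerivAt θ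
      (HasFDerivAt.fun_sum (u := B) fun τ _ => (hρ τ).hasFDerivAt)).const_mul (c B)
    rwa [smul_smul] at this
  refine (HasFDerivAt.fun_sum fun B _ => hB B).congr_fderiv ?_
  simp_rw [Finset.sum_smul, Finset.smul_sum]
  exact Finset.sum_comm' fun B τ => by simp

theorem stmt_12_general {T : Type*} [Fintype T] {d : ℕ}
    (R : T → ℝ) (hR : ∀ τ, 0 ≤ R τ)
    (ρ : EuclideanSpace ℝ (Fin d) → T → ℝ)
    (hρ_diff : ∀ τ, Differentiable ℝ (fun θ => ρ θ τ))
    (w : ℝ → ℝ) (hw_diff : Differentiable ℝ w) (hw0 : w 0 = 0) :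
    Differentiable ℝ
        (fun θ => ∫ z in Set.Ioi (0:ℝ), w (∑ τ, if z < R τ then ρ θ τ else 0)) ∧
      ∀ θ : EuclideanSpace ℝ (Fin d),
        gradient (fun θ' => ∫ z in Set.Ioi (0:ℝ),
            w (∑ τ, if z < R τ then ρ θ' τ else 0)) θ
          = ∑ τ, (∫ z in (0:ℝ)..(R τ),
              deriv w (∑ τ', if z < R τ' then ρ θ τ' else 0))
                • gradient (fun θ' => ρ θ' τ) θ := by
  classical
  have hS : ∀ θ z, (∑ τ, if z < R τ then ρ θ τ else 0) = ∑ τ ∈ superlevelFinset R z, ρ θ τ :=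
    fun θ z => (sum_filter _ _).symm
  have hJ : (fun θ => ∫ z in Ioi (0:ℝ), w (∑ τ, if z < R τ then ρ θ τ else 0)) =
      fun θ => ∑ B, layerLength R B * w (∑ τ ∈ B, ρ θ τ) := by
    funext θ
    simp_rw [hS]
    exact integral_Ioi_comp_superlevelFinset R (fun B => w (∑ τ ∈ B, ρ θ τ)) (by simp [hw0])
  have hφ : ∀ θ τ, ∫ z in (0:ℝ)..R τ, deriv w (∑ τ', if z < R τ' then ρ θ τ' else 0) =
      ∑ B with τ ∈ B, layerLength R B * deriv w (∑ τ' ∈ B, ρ θ τ') := fun θ τ => by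
    simp_rw [hS]
    exact intervalIntegral_comp_superlevelFinset R (hR τ) (fun B => deriv w (∑ τ' ∈ B, ρ θ τ'))
  have hJ_deriv θ := hasFDerivAt_sum_mul_comp_sum (fun τ => (hρ_diff τ).differentiableAt (x := θ))
    hw_diff (layerLength R)
  refine ⟨hJ ▸ fun θ => (hJ_deriv θ).differentiableAt, fun θ => ?_⟩
  simp_rw [hJ, hφ, gradient, (hJ_deriv θ).fderiv, map_sum, map_smul]

/-- CPT policy gradient theorem on a finite trajectory space (gains term):
with a finite type `T` of trajectories, nonnegative returns `R`, a differentiably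
parametrized probability mass function `ρ θ` on `T`, a differentiable distortion
`w : [0,1] → [0,1]` with `w(0) = 0`, the CPT objective
`J(θ) = ∫_0^∞ w(Σ_{R(τ) > z} ρ_θ(τ)) dz` is differentiable with gradient
`∇J(θ) = Σ_τ φ_θ(R(τ)) · ∇_θ ρ_θ(τ)` where `φ_θ(t) = ∫_0^t w'(S_θ(z)) dz`. -/
theorem stmt_12 {T : Type*} [Fintype T] {d : ℕ}
    (R : T → ℝ) (hR : ∀ τ, 0 ≤ R τ)
    (ρ : EuclideanSpace ℝ (Fin d) → T → ℝ)
    (hρ_nonneg : ∀ θ τ, 0 ≤ ρ θ τ)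
    (hρ_sum : ∀ θ, ∑ τ, ρ θ τ = 1)
    (hρ_diff : ∀ τ, Differentiable ℝ (fun θ => ρ θ τ))
    (w : ℝ → ℝ) (hw_diff : Differentiable ℝ w) (hw0 : w 0 = 0)
    (hw_maps : Set.MapsTo w (Set.Icc 0 1) (Set.Icc 0 1)) :
    Differentiable ℝ
        (fun θ => ∫ z in Set.Ioi (0:ℝ), w (∑ τ, if z < R τ then ρ θ τ else 0)) ∧
      ∀ θ : EuclideanSpace ℝ (Fin d),
        gradient (fun θ' => ∫ z in Set.Ioi (0:ℝ),
            w (∑ τ, if z < R τ then ρ θ' τ else 0)) θ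
          = ∑ τ, (∫ z in (0:ℝ)..(R τ),
              deriv w (∑ τ', if z < R τ' then ρ θ τ' else 0))
                • gradient (fun θ' => ρ θ' τ) θ :=
  stmt_12_general R hR ρ hρ_diff w hw_diff hw0
end
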